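/- Let C be a hermitian category. A sesquilinear form over C is hyperbolic if and only if it is isometric to a form of the shape (M ⊕ N, [[0,f],[g,0]]) where M, N are objects of C, f ∈ Hom_C(N, M*), g ∈ Hom_C(M, N*), and [[0,f],[g,0]] denotes the morphism M ⊕ N → M* ⊕ N* = (M ⊕ N)* given in matrix form. In particular, every form (M ⊕ N, [[0,f],[g,0]]) of this shape is a hyperbolic sesquilinear form. -/

import Mathlib

/-!
In `TDA(C)` write `Q = (M, N, f, g)`; then `Q ⊕ Q*` is `(M ⊕ N, N ⊕ M, …)` and both components
of `H_1(Q)` are the swap `M ⊕ N ⟶ N ⊕ M`. An isometry `(φ, ψ^op)` from `F(V, s)` to `H_1(Q)`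
therefore has `ψ⁻¹ = swap ∘ φ`, and its condition on the second arrows,
`φ ≫ g_{Q ⊕ Q*} = s ≫ ψ*`, says precisely that `φ` is an isometry from `s` to the split form
`[[0, f* ∘ ω], [g, 0]]`. Conversely, for a split form `[[0, f], [g, 0]]` the pair `(id, swap^op)` is
an isometry from its image under `F` to `H_1(M, N, f* ∘ ω, g)`, because `(f* ∘ ω)* ∘ ω = f`.
-/

open CategoryTheory CategoryTheory.Limits

noncomputable section

universe v u

namespace HermCat

variable {C : Type u} [Category.{v} C] [Preadditive C]

/-- A hermitian structure on an additive category `C`: a contravariant additive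
functor `*` together with a natural transformation `ω : id → **` satisfying
`(ω_X)* ∘ ω_{X*} = id_{X*}`. -/
structure HermStructure (C : Type u) [Category.{v} C] [Preadditive C] where
  star : C → C
  starMap : ∀ {X Y : C}, (X ⟶ Y) → (star Y ⟶ star X)
  starMap_id : ∀ X : C, starMap (𝟙 X) = 𝟙 (star X)
  starMap_comp : ∀ {X Y Z : C} (f : X ⟶ Y) (g : Y ⟶ Z),
    starMap (f ≫ g) = starMap g ≫ starMap f
  starMap_add : ∀ {X Y : C} (f g : X ⟶ Y), starMap (f + g) = starMap f + starMap g
  omega : ∀ X : C, X ⟶ star (star X)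
  omega_natural : ∀ {X Y : C} (f : X ⟶ Y),
    f ≫ omega Y = omega X ≫ starMap (starMap f)
  omega_star : ∀ X : C, omega (star X) ≫ starMap (omega X) = 𝟙 (star X)

namespace HermStructure

variable (H : HermStructure C)

/-- The additive-monoid-hom incarnation of `starMap`. -/
def starHom (X Y : C) : (X ⟶ Y) →+ (H.star Y ⟶ H.star X) :=
  AddMonoidHom.mk' H.starMap (fun f g => H.starMap_add f g)

theorem starMap_zero (X Y : C) : H.starMap (0 : X ⟶ Y) = 0 :=
  (H.starHom X Y).map_zero

theorem starMap_neg {X Y : C} (f : X ⟶ Y) : H.starMap (-f) = -H.starMap f :=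
  (H.starHom X Y).map_neg f

theorem starMap_sub {X Y : C} (f g : X ⟶ Y) :
    H.starMap (f - g) = H.starMap f - H.starMap g :=
  (H.starHom X Y).map_sub f g

theorem starMap_nsmul {X Y : C} (n : ℕ) (f : X ⟶ Y) :
    H.starMap (n • f) = n • H.starMap f :=
  (H.starHom X Y).map_nsmul n f

theorem starMap_zsmul {X Y : C} (n : ℤ) (f : X ⟶ Y) :
    H.starMap (n • f) = n • H.starMap f :=
  (H.starHom X Y).map_zsmul n f

/-- An object is reflexive if `ω_X` is an isomorphism. -/
def Reflexive (X : C) : Prop := IsIso (H.omega X)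

/-- A sesquilinear form `s : M ⟶ M*` is unimodular if `s` and `s* ∘ ω_M` are
isomorphisms. -/
def IsUnimodular {M : C} (s : M ⟶ H.star M) : Prop :=
  IsIso s ∧ IsIso (H.omega M ≫ H.starMap s)

/-- A sesquilinear form `s : M ⟶ M*` is `ε`-hermitian if `s = ε • (s* ∘ ω_M)`. -/
def IsEpsHermitian (ε : ℤ) {M : C} (s : M ⟶ H.star M) : Prop :=
  s = ε • (H.omega M ≫ H.starMap s)

/-- `f` is an isometry from `(M, s)` to `(M', s')` if it is an isomorphism with
`s = f* ∘ s' ∘ f`. -/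
def IsIsometry {M M' : C} (s : M ⟶ H.star M) (s' : M' ⟶ H.star M')
    (f : M ⟶ M') : Prop :=
  IsIso f ∧ s = f ≫ s' ≫ H.starMap f

/-- Two sesquilinear forms are isometric if there is an isometry between them. -/
def Isometric {M M' : C} (s : M ⟶ H.star M) (s' : M' ⟶ H.star M') : Prop :=
  ∃ f : M ⟶ M', H.IsIsometry s s' f

section Biprod

variable [HasBinaryBiproducts C]

/-- The underlying object `Q ⊕ Q*` of the hyperbolic form. -/
def hypObj (Q : C) : C := Q ⊞ H.star Q

/-- The hyperbolic `ε`-hermitian form `H_ε(Q)` on `Q ⊕ Q*`, given in matrix form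
by `[[0, id_{Q*}], [ε·ω_Q, 0]]` (composed with the canonical identification
`Q* ⊕ Q** ≅ (Q ⊕ Q*)*`). -/
def hypForm (ε : ℤ) (Q : C) : H.hypObj Q ⟶ H.star (H.hypObj Q) :=
  biprod.lift (biprod.snd) (ε • (biprod.fst ≫ H.omega Q)) ≫
    biprod.desc (H.starMap biprod.fst) (H.starMap biprod.snd)

/-- A form is hyperbolic (as a unimodular `ε`-hermitian form) if it is isometric
to `(Q ⊕ Q*, H_ε(Q))` for some reflexive object `Q`. -/
def IsHyperbolic (ε : ℤ) {M : C} (s : M ⟶ H.star M) : Prop :=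
  ∃ Q : C, H.Reflexive Q ∧ H.Isometric s (H.hypForm ε Q)

/-- The orthogonal sum of two sesquilinear forms. -/
def orthSum {M M' : C} (s : M ⟶ H.star M) (s' : M' ⟶ H.star M') :
    M ⊞ M' ⟶ H.star (M ⊞ M') :=
  biprod.desc (s ≫ H.starMap biprod.fst) (s' ≫ H.starMap biprod.snd)

/-- The "split" form `[[0, f], [g, 0]]` on `M ⊕ N`, where `f : N ⟶ M*` and
`g : M ⟶ N*`. -/
def splitForm {M N : C} (f : N ⟶ H.star M) (g : M ⟶ H.star N) :
    M ⊞ N ⟶ H.star (M ⊞ N) :=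
  biprod.desc (g ≫ H.starMap biprod.snd) (f ≫ H.starMap biprod.fst)

end Biprod

end HermStructure

/-! ## The category of twisted double arrows -/

variable {ι : Type v}

/-- Objects of the category `TDA_I(C)` of twisted double `I`-arrows: quadruples
`(M, N, {f_i}, {g_i})` with `f_i, g_i : M ⟶ N^{*_i}`. -/
structure TDAObj (Hs : ι → HermStructure C) : Type (max u v) where
  M : C
  N : C
  f : ∀ i, M ⟶ (Hs i).star N
  g : ∀ i, M ⟶ (Hs i).star N

namespace TDAObj

variable {Hs : ι → HermStructure C}

/-- Morphisms `(M,N,{f_i},{g_i}) ⟶ (M',N',{f'_i},{g'_i})` in `TDA_I(C)`: pairs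
`(φ, ψ^op)` with `φ : M ⟶ M'`, `ψ : N' ⟶ N`, `f'_i ∘ φ = ψ^{*_i} ∘ f_i` and
`g'_i ∘ φ = ψ^{*_i} ∘ g_i`. -/
@[ext]
structure Hom (Z Z' : TDAObj Hs) : Type v where
  φ : Z.M ⟶ Z'.M
  ψ : Z'.N ⟶ Z.N
  condf : ∀ i, φ ≫ Z'.f i = Z.f i ≫ (Hs i).starMap ψ
  condg : ∀ i, φ ≫ Z'.g i = Z.g i ≫ (Hs i).starMap ψ

instance category : Category (TDAObj Hs) where
  Hom := Hom
  id Z := ⟨𝟙 Z.M, 𝟙 Z.N, fun i => by simp [(Hs i).starMap_id],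
    fun i => by simp [(Hs i).starMap_id]⟩
  comp {Z Z' Z''} u v := ⟨u.φ ≫ v.φ, v.ψ ≫ u.ψ,
    fun i => by
      rw [Category.assoc, v.condf i, ← Category.assoc, u.condf i, (Hs i).starMap_comp,
        Category.assoc],
    fun i => by
      rw [Category.assoc, v.condg i, ← Category.assoc, u.condg i, (Hs i).starMap_comp,
        Category.assoc]⟩
  id_comp u := by apply Hom.ext <;> simp
  comp_id u := by apply Hom.ext <;> simp
  assoc u v w := by apply Hom.ext <;> simp

@[simp] theorem id_φ (Z : TDAObj Hs) : Hom.φ (𝟙 Z) = 𝟙 Z.M := rfl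
@[simp] theorem id_ψ (Z : TDAObj Hs) : Hom.ψ (𝟙 Z) = 𝟙 Z.N := rfl
@[simp] theorem comp_φ {Z Z' Z'' : TDAObj Hs} (u : Z ⟶ Z') (v : Z' ⟶ Z'') :
    (u ≫ v).φ = u.φ ≫ v.φ := rfl
@[simp] theorem comp_ψ {Z Z' Z'' : TDAObj Hs} (u : Z ⟶ Z') (v : Z' ⟶ Z'') :
    (u ≫ v).ψ = v.ψ ≫ u.ψ := rfl

theorem hom_ext {Z Z' : TDAObj Hs} {u v : Z ⟶ Z'} (h1 : Hom.φ u = Hom.φ v)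
    (h2 : Hom.ψ u = Hom.ψ v) : u = v := Hom.ext h1 h2

instance homZero (Z Z' : TDAObj Hs) : Zero (Z ⟶ Z') :=
  ⟨⟨0, 0, fun i => by simp [(Hs i).starMap_zero], fun i => by simp [(Hs i).starMap_zero]⟩⟩

instance homAdd (Z Z' : TDAObj Hs) : Add (Z ⟶ Z') :=
  ⟨fun u v => ⟨u.φ + v.φ, u.ψ + v.ψ,
    fun i => by simp [Preadditive.add_comp, Preadditive.comp_add, (Hs i).starMap_add,
      u.condf i, v.condf i],
    fun i => by simp [Preadditive.add_comp, Preadditive.comp_add, (Hs i).starMap_add,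
      u.condg i, v.condg i]⟩⟩

instance homNeg (Z Z' : TDAObj Hs) : Neg (Z ⟶ Z') :=
  ⟨fun u => ⟨-u.φ, -u.ψ,
    fun i => by simp [Preadditive.neg_comp, Preadditive.comp_neg, (Hs i).starMap_neg,
      u.condf i],
    fun i => by simp [Preadditive.neg_comp, Preadditive.comp_neg, (Hs i).starMap_neg,
      u.condg i]⟩⟩

instance homSub (Z Z' : TDAObj Hs) : Sub (Z ⟶ Z') :=
  ⟨fun u v => ⟨u.φ - v.φ, u.ψ - v.ψ,
    fun i => by simp [Preadditive.sub_comp, Preadditive.comp_sub, (Hs i).starMap_sub,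
      u.condf i, v.condf i],
    fun i => by simp [Preadditive.sub_comp, Preadditive.comp_sub, (Hs i).starMap_sub,
      u.condg i, v.condg i]⟩⟩

instance homSMulNat (Z Z' : TDAObj Hs) : SMul ℕ (Z ⟶ Z') :=
  ⟨fun n u => ⟨n • u.φ, n • u.ψ,
    fun i => by simp [Preadditive.nsmul_comp, Preadditive.comp_nsmul, (Hs i).starMap_nsmul,
      u.condf i],
    fun i => by simp [Preadditive.nsmul_comp, Preadditive.comp_nsmul, (Hs i).starMap_nsmul,
      u.condg i]⟩⟩

instance homSMulInt (Z Z' : TDAObj Hs) : SMul ℤ (Z ⟶ Z') :=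
  ⟨fun n u => ⟨n • u.φ, n • u.ψ,
    fun i => by simp [Preadditive.zsmul_comp, Preadditive.comp_zsmul, (Hs i).starMap_zsmul,
      u.condf i],
    fun i => by simp [Preadditive.zsmul_comp, Preadditive.comp_zsmul, (Hs i).starMap_zsmul,
      u.condg i]⟩⟩

@[simp] theorem add_φ {Z Z' : TDAObj Hs} (u v : Z ⟶ Z') : (u + v).φ = u.φ + v.φ := rfl
@[simp] theorem add_ψ {Z Z' : TDAObj Hs} (u v : Z ⟶ Z') : (u + v).ψ = u.ψ + v.ψ := rfl
@[simp] theorem zero_φ {Z Z' : TDAObj Hs} : (0 : Z ⟶ Z').φ = 0 := rfl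
@[simp] theorem zero_ψ {Z Z' : TDAObj Hs} : (0 : Z ⟶ Z').ψ = 0 := rfl
@[simp] theorem neg_φ {Z Z' : TDAObj Hs} (u : Z ⟶ Z') : (-u).φ = -u.φ := rfl
@[simp] theorem neg_ψ {Z Z' : TDAObj Hs} (u : Z ⟶ Z') : (-u).ψ = -u.ψ := rfl

instance homAddCommGroup (Z Z' : TDAObj Hs) : AddCommGroup (Z ⟶ Z') :=
  Function.Injective.addCommGroup (fun u => (Hom.φ u, Hom.ψ u))
    (fun u v h => by
      apply hom_ext
      · exact congrArg Prod.fst h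
      · exact congrArg Prod.snd h)
    rfl (fun _ _ => rfl) (fun _ => rfl) (fun _ _ => rfl) (fun _ _ => rfl) (fun _ _ => rfl)

instance preadditive : Preadditive (TDAObj Hs) where
  add_comp Z Z' Z'' u u' v := by apply hom_ext <;> simp
  comp_add Z Z' Z'' u v v' := by apply hom_ext <;> simp

end TDAObj

/-- The hermitian structure on the category of twisted double `I`-arrows. -/
def tdaHerm (Hs : ι → HermStructure C) : HermStructure (TDAObj Hs) where
  star Z := ⟨Z.N, Z.M, fun i => (Hs i).omega Z.N ≫ (Hs i).starMap (Z.g i),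
    fun i => (Hs i).omega Z.N ≫ (Hs i).starMap (Z.f i)⟩
  starMap {Z Z'} u := ⟨u.ψ, u.φ,
    fun i => by
      rw [← Category.assoc, (Hs i).omega_natural u.ψ, Category.assoc, Category.assoc,
        ← (Hs i).starMap_comp, ← u.condg i, (Hs i).starMap_comp],
    fun i => by
      rw [← Category.assoc, (Hs i).omega_natural u.ψ, Category.assoc, Category.assoc,
        ← (Hs i).starMap_comp, ← u.condf i, (Hs i).starMap_comp]⟩
  starMap_id Z := by apply TDAObj.hom_ext <;> rfl
  starMap_comp u v := by apply TDAObj.hom_ext <;> rfl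
  starMap_add u v := by apply TDAObj.hom_ext <;> rfl
  omega Z := ⟨𝟙 Z.M, 𝟙 Z.N,
    fun i => by
      simp only [Category.id_comp, (Hs i).starMap_id, Category.comp_id]
      rw [(Hs i).starMap_comp, ← Category.assoc, ← (Hs i).omega_natural (Z.f i),
        Category.assoc, (Hs i).omega_star, Category.comp_id],
    fun i => by
      simp only [Category.id_comp, (Hs i).starMap_id, Category.comp_id]
      rw [(Hs i).starMap_comp, ← Category.assoc, ← (Hs i).omega_natural (Z.g i),
        Category.assoc, (Hs i).omega_star, Category.comp_id]⟩
  omega_natural u := by apply TDAObj.hom_ext <;> simp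
  omega_star Z := by apply TDAObj.hom_ext <;> simp

/-! ## Biproducts in `TDA_I(C)` -/

namespace TDAObj

variable {Hs : ι → HermStructure C} [HasBinaryBiproducts C]

/-- The biproduct of two objects of `TDA_I(C)`. -/
def biprodObj (Z W : TDAObj Hs) : TDAObj Hs where
  M := Z.M ⊞ W.M
  N := Z.N ⊞ W.N
  f i := biprod.desc (Z.f i ≫ (Hs i).starMap biprod.fst) (W.f i ≫ (Hs i).starMap biprod.snd)
  g i := biprod.desc (Z.g i ≫ (Hs i).starMap biprod.fst) (W.g i ≫ (Hs i).starMap biprod.snd)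

/-- The binary bicone exhibiting `biprodObj Z W` as a biproduct. -/
def biprodBicone (Z W : TDAObj Hs) : BinaryBicone Z W where
  pt := biprodObj Z W
  fst := ⟨biprod.fst, biprod.inl,
    fun i => by
      apply biprod.hom_ext' <;>
      simp [biprodObj, ← (Hs i).starMap_comp, (Hs i).starMap_zero, (Hs i).starMap_id],
    fun i => by
      apply biprod.hom_ext' <;>
      simp [biprodObj, ← (Hs i).starMap_comp, (Hs i).starMap_zero, (Hs i).starMap_id]⟩
  snd := ⟨biprod.snd, biprod.inr,
    fun i => by
      apply biprod.hom_ext' <;>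
      simp [biprodObj, ← (Hs i).starMap_comp, (Hs i).starMap_zero, (Hs i).starMap_id],
    fun i => by
      apply biprod.hom_ext' <;>
      simp [biprodObj, ← (Hs i).starMap_comp, (Hs i).starMap_zero, (Hs i).starMap_id]⟩
  inl := ⟨biprod.inl, biprod.fst,
    fun i => by simp [biprodObj],
    fun i => by simp [biprodObj]⟩
  inr := ⟨biprod.inr, biprod.snd,
    fun i => by simp [biprodObj],
    fun i => by simp [biprodObj]⟩
  inl_fst := by apply hom_ext <;> exact biprod.inl_fst
  inl_snd := by apply hom_ext <;> first | exact biprod.inl_snd | exact biprod.inr_fst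
  inr_fst := by apply hom_ext <;> first | exact biprod.inr_fst | exact biprod.inl_snd
  inr_snd := by apply hom_ext <;> exact biprod.inr_snd

instance hasBinaryBiproducts : HasBinaryBiproducts (TDAObj Hs) where
  has_binary_biproduct Z W :=
    hasBinaryBiproduct_of_total (biprodBicone Z W) (by apply hom_ext <;> exact biprod.total)

end TDAObj

/-! ## Isomorphisms in `TDA_I(C)` -/

namespace TDAObj

variable {Hs : ι → HermStructure C}

theorem isIso_of {Z Z' : TDAObj Hs} (u : Z ⟶ Z') (h1 : IsIso u.φ) (h2 : IsIso u.ψ) :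
    IsIso u := by
  refine ⟨⟨⟨inv u.φ, inv u.ψ, fun i => ?_, fun i => ?_⟩, ?_, ?_⟩⟩
  · have h := u.condf i
    have : Z'.f i = inv u.φ ≫ Z.f i ≫ (Hs i).starMap u.ψ := by
      rw [← h, IsIso.inv_hom_id_assoc]
    rw [this, Category.assoc, Category.assoc, ← (Hs i).starMap_comp,
      IsIso.inv_hom_id, (Hs i).starMap_id, Category.comp_id]
  · have h := u.condg i
    have : Z'.g i = inv u.φ ≫ Z.g i ≫ (Hs i).starMap u.ψ := by
      rw [← h, IsIso.inv_hom_id_assoc]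
    rw [this, Category.assoc, Category.assoc, ← (Hs i).starMap_comp,
      IsIso.inv_hom_id, (Hs i).starMap_id, Category.comp_id]
  · apply hom_ext <;> simp
  · apply hom_ext <;> simp

end TDAObj

/-! ## Categories of (systems of) sesquilinear forms -/

/-- Objects of the category `Sesq(C)` of sesquilinear forms over `(C, H)`. -/
structure FormObj (H : HermStructure C) : Type (max u v) where
  pt : C
  form : pt ⟶ H.star pt

namespace FormObj

variable {H : HermStructure C}

/-- `Sesq(C)`: morphisms are isometries. -/
instance category : Category (FormObj H) where
  Hom X Y := { f : X.pt ⟶ Y.pt // H.IsIsometry X.form Y.form f }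
  id X := ⟨𝟙 X.pt, inferInstance, by simp [H.starMap_id]⟩
  comp {X Y Z} u v := ⟨u.1 ≫ v.1, by
    obtain ⟨uf, hu1, hu2⟩ := u
    obtain ⟨vf, hv1, hv2⟩ := v
    haveI := hu1; haveI := hv1
    refine ⟨inferInstance, ?_⟩
    show X.form = (uf ≫ vf) ≫ Z.form ≫ H.starMap (uf ≫ vf)
    rw [hu2, hv2, H.starMap_comp]
    simp⟩
  id_comp u := by apply Subtype.ext; simp
  comp_id u := by apply Subtype.ext; simp
  assoc u v w := by apply Subtype.ext; simp

@[simp] theorem id_val (X : FormObj H) : (𝟙 X : X ⟶ X).1 = 𝟙 X.pt := rfl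
@[simp] theorem comp_val {X Y Z : FormObj H} (u : X ⟶ Y) (v : Y ⟶ Z) :
    (u ≫ v).1 = u.1 ≫ v.1 := rfl

end FormObj

/-- The predicate selecting unimodular `ε`-hermitian forms. -/
def hermPred (H : HermStructure C) (ε : ℤ) : FormObj H → Prop :=
  fun X => H.IsUnimodular X.form ∧ H.IsEpsHermitian ε X.form

/-- The category `Herm_ε(C)` of unimodular `ε`-hermitian forms over `(C, H)`. -/
abbrev HermFormCat (H : HermStructure C) (ε : ℤ) := ObjectProperty.FullSubcategory (hermPred H ε)

/-- Objects of the category of systems of sesquilinear forms over `(C, {(*_i, ω_i)})`. -/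
structure SysFormObj (Hs : ι → HermStructure C) : Type (max u v) where
  pt : C
  form : ∀ i, pt ⟶ (Hs i).star pt

namespace SysFormObj

variable {Hs : ι → HermStructure C}

/-- `f` is an isometry of systems of sesquilinear forms. -/
def IsIsometry (X Y : SysFormObj Hs) (f : X.pt ⟶ Y.pt) : Prop :=
  IsIso f ∧ ∀ i, X.form i = f ≫ Y.form i ≫ (Hs i).starMap f

/-- Two systems of sesquilinear forms are isometric. -/
def Isometric (X Y : SysFormObj Hs) : Prop := ∃ f, IsIsometry X Y f

/-- The category of systems of sesquilinear forms, with isometries as morphisms. -/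
instance category : Category (SysFormObj Hs) where
  Hom X Y := { f : X.pt ⟶ Y.pt // IsIsometry X Y f }
  id X := ⟨𝟙 X.pt, inferInstance, fun i => by simp [(Hs i).starMap_id]⟩
  comp {X Y Z} u v := ⟨u.1 ≫ v.1, by
    obtain ⟨uf, hu1, hu2⟩ := u
    obtain ⟨vf, hv1, hv2⟩ := v
    haveI := hu1; haveI := hv1
    refine ⟨inferInstance, fun i => ?_⟩
    show X.form i = (uf ≫ vf) ≫ Z.form i ≫ (Hs i).starMap (uf ≫ vf)
    rw [hu2 i, hv2 i, (Hs i).starMap_comp]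
    simp⟩
  id_comp u := by apply Subtype.ext; simp
  comp_id u := by apply Subtype.ext; simp
  assoc u v w := by apply Subtype.ext; simp

/-- The orthogonal sum of two systems of sesquilinear forms. -/
def orthSum [HasBinaryBiproducts C] (X Y : SysFormObj Hs) : SysFormObj Hs where
  pt := X.pt ⊞ Y.pt
  form i := biprod.desc (X.form i ≫ (Hs i).starMap biprod.fst)
    (Y.form i ≫ (Hs i).starMap biprod.snd)

end SysFormObj

/-! ## The functor `F` from (systems of) sesquilinear forms to hermitian forms over `TDA` -/

section FFunctor

variable {Hs : ι → HermStructure C}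

theorem HermStructure.omega_starMap_key (H : HermStructure C) {M : C}
    (s : M ⟶ H.star M) :
    H.omega M ≫ H.starMap (H.omega M ≫ H.starMap s) = s := by
  rw [H.starMap_comp, ← Category.assoc, ← H.omega_natural s, Category.assoc,
    H.omega_star, Category.comp_id]

/-- The twisted double arrow `Z(M, {s_i}) = (M, M, {s_i^* ∘ ω_M}, {s_i})` associated with a
system of sesquilinear forms. -/
def sysZ {M : C} (s : ∀ i, M ⟶ (Hs i).star M) : TDAObj Hs :=
  ⟨M, M, fun i => (Hs i).omega M ≫ (Hs i).starMap (s i), fun i => s i⟩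

/-- The canonical `1`-hermitian form `(id_M, id_M^op)` on `Z(M, {s_i})`. -/
def sysZForm {M : C} (s : ∀ i, M ⟶ (Hs i).star M) :
    sysZ s ⟶ (tdaHerm Hs).star (sysZ s) :=
  ⟨𝟙 M, 𝟙 M,
    fun i => by
      simp only [tdaHerm, sysZ, Category.id_comp, (Hs i).starMap_id, Category.comp_id],
    fun i => by
      simp only [tdaHerm, sysZ, Category.id_comp, (Hs i).starMap_id, Category.comp_id]
      rw [(Hs i).omega_starMap_key]⟩

theorem sysZForm_isIso {M : C} (s : ∀ i, M ⟶ (Hs i).star M) : IsIso (sysZForm s) :=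
  TDAObj.isIso_of (sysZForm s) (inferInstanceAs (IsIso (𝟙 M)))
    (inferInstanceAs (IsIso (𝟙 M)))

theorem sysZForm_unimodular {M : C} (s : ∀ i, M ⟶ (Hs i).star M) :
    (tdaHerm Hs).IsUnimodular (sysZForm s) := by
  constructor
  · exact sysZForm_isIso s
  · exact TDAObj.isIso_of _ (inferInstanceAs (IsIso (𝟙 M ≫ 𝟙 M)))
      (inferInstanceAs (IsIso (𝟙 M ≫ 𝟙 M)))

theorem sysZForm_hermitian {M : C} (s : ∀ i, M ⟶ (Hs i).star M) :
    (tdaHerm Hs).IsEpsHermitian 1 (sysZForm s) := by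
  unfold HermStructure.IsEpsHermitian
  rw [one_zsmul]
  apply TDAObj.hom_ext <;> exact (Category.comp_id _).symm

/-- The object part of the functor `F`. -/
def Fobj (X : SysFormObj Hs) : HermFormCat (tdaHerm Hs) 1 :=
  ⟨⟨sysZ X.form, sysZForm X.form⟩, ⟨sysZForm_unimodular X.form, sysZForm_hermitian X.form⟩⟩

/-- The map part of the functor `F`. -/
def Fmap {X Y : SysFormObj Hs} (u : X ⟶ Y) : Fobj X ⟶ Fobj Y := by
  haveI := u.2.1
  refine ⟨⟨⟨u.1, (inv (u.1 : X.pt ⟶ Y.pt) : Y.pt ⟶ X.pt), fun i => ?_, fun i => ?_⟩, ?_, ?_⟩⟩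
  · show u.1 ≫ (Hs i).omega Y.pt ≫ (Hs i).starMap (Y.form i) =
      ((Hs i).omega X.pt ≫ (Hs i).starMap (X.form i)) ≫ (Hs i).starMap (inv u.1)
    calc u.1 ≫ (Hs i).omega Y.pt ≫ (Hs i).starMap (Y.form i)
        = (Hs i).omega X.pt ≫ (Hs i).starMap ((Hs i).starMap u.1) ≫
            (Hs i).starMap (Y.form i) := by
          rw [← Category.assoc, (Hs i).omega_natural u.1, Category.assoc]
      _ = (Hs i).omega X.pt ≫ (Hs i).starMap (Y.form i ≫ (Hs i).starMap u.1) := by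
          rw [(Hs i).starMap_comp]
      _ = (Hs i).omega X.pt ≫ (Hs i).starMap (inv u.1 ≫ X.form i) := by
          rw [u.2.2 i, IsIso.inv_hom_id_assoc]
      _ = ((Hs i).omega X.pt ≫ (Hs i).starMap (X.form i)) ≫ (Hs i).starMap (inv u.1) := by
          rw [(Hs i).starMap_comp, Category.assoc]
  · show u.1 ≫ Y.form i = X.form i ≫ (Hs i).starMap (inv u.1)
    rw [u.2.2 i, Category.assoc, Category.assoc, ← (Hs i).starMap_comp,
      IsIso.inv_hom_id, (Hs i).starMap_id, Category.comp_id]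
  · exact TDAObj.isIso_of _ (by show IsIso u.1; infer_instance)
      (by show IsIso (inv u.1); infer_instance)
  · apply TDAObj.hom_ext
    · show 𝟙 X.pt = u.1 ≫ 𝟙 Y.pt ≫ inv u.1
      simp
    · show 𝟙 X.pt = (u.1 ≫ 𝟙 Y.pt) ≫ inv u.1
      simp

/-- The functor `F` from systems of sesquilinear forms over `(C, {(*_i, ω_i)})` to
unimodular `1`-hermitian forms over `TDA_I(C)`, given by
`F(M, {s_i}) = ((M, M, {s_i^{*_i} ∘ ω_{i,M}}, {s_i}), (id_M, id_M^op))` and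
`F(ψ) = (ψ, (ψ⁻¹)^op)`. -/
def Ffunctor (Hs : ι → HermStructure C) : SysFormObj Hs ⥤ HermFormCat (tdaHerm Hs) 1 where
  obj := Fobj
  map := Fmap
  map_id X := by
    haveI : IsIso ((𝟙 X : X ⟶ X).1) := (𝟙 X : X ⟶ X).2.1
    apply ObjectProperty.hom_ext; apply Subtype.ext; apply TDAObj.hom_ext
    · rfl
    · show inv ((𝟙 X : X ⟶ X).1) = 𝟙 X.pt
      change inv (𝟙 X.pt) = 𝟙 X.pt
      simp
  map_comp {X Y Z} u v := by
    haveI := u.2.1; haveI := v.2.1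
    haveI : IsIso ((u ≫ v).1) := (u ≫ v).2.1
    apply ObjectProperty.hom_ext; apply Subtype.ext; apply TDAObj.hom_ext
    · rfl
    · show inv ((u ≫ v).1) = inv v.1 ≫ inv u.1
      change inv (u.1 ≫ v.1) = inv v.1 ≫ inv u.1
      simp

end FFunctor

end HermCat

namespace HermCat

variable {C : Type u} [Category.{v} C] [Preadditive C]

/-- A sesquilinear form `(M, s)` over `(C, H)` is hyperbolic if its image
`F(M, s) = (Z(M,s), (id, id^op))` under the equivalence `F` is a hyperbolic unimodular
`1`-hermitian form over `TDA(C)`. -/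
def IsHypSesq (H : HermStructure C) [HasBinaryBiproducts C] {M : C}
    (s : M ⟶ H.star M) : Prop :=
  (tdaHerm (fun _ : PUnit.{v + 1} => H)).IsHyperbolic 1
    (sysZForm (fun _ : PUnit.{v + 1} => s))

end HermCat

namespace HermCat

namespace HermStructure

variable {D : Type u} [Category.{v} D] [Preadditive D] {H : HermStructure D}

theorem Isometric.symm {X Y : D} {a : X ⟶ H.star X} {b : Y ⟶ H.star Y}
    (h : H.Isometric a b) : H.Isometric b a := by
  obtain ⟨e, he, rfl⟩ := h
  refine ⟨inv e, inferInstance, ?_⟩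
  simp [← H.starMap_comp, H.starMap_id]

theorem Isometric.trans {X Y Z : D} {a : X ⟶ H.star X} {b : Y ⟶ H.star Y}
    {c : Z ⟶ H.star Z} (hab : H.Isometric a b) (hbc : H.Isometric b c) :
    H.Isometric a c := by
  obtain ⟨e, he, rfl⟩ := hab
  obtain ⟨e', he', rfl⟩ := hbc
  exact ⟨e ≫ e', inferInstance, by simp [H.starMap_comp]⟩

variable (H)

theorem omega_starMap_omega_starMap {X Y : D} (f : X ⟶ H.star Y) :
    H.omega X ≫ H.starMap (H.omega Y ≫ H.starMap f) = f := by
  rw [H.starMap_comp, ← Category.assoc, ← H.omega_natural f, Category.assoc,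
    H.omega_star, Category.comp_id]

theorem comp_omega_comp_starMap {X Y Z : D} (e : X ⟶ Y) (s : Z ⟶ H.star Y) :
    e ≫ H.omega Y ≫ H.starMap s = H.omega X ≫ H.starMap (s ≫ H.starMap e) := by
  rw [← Category.assoc, H.omega_natural, Category.assoc, H.starMap_comp]

/-- `H_ε(Q)` written on any bicone of `Q` and `Q*`. In `TDA(C)` the chosen biproduct `Q ⊞ Q*` is
not definitionally `TDAObj.biprodObj`, whose components are explicit. -/
def hypFormOn (ε : ℤ) {Q : D} (b : BinaryBicone Q (H.star Q)) : b.pt ⟶ H.star b.pt :=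
  b.snd ≫ H.starMap b.fst + ε • (b.fst ≫ H.omega Q ≫ H.starMap b.snd)

variable [HasBinaryBiproducts D]

theorem isometric_hypFormOn_hypForm (ε : ℤ) {Q : D} {b : BinaryBicone Q (H.star Q)}
    (hb : b.IsBilimit) : H.Isometric (H.hypFormOn ε b) (H.hypForm ε Q) := by
  refine ⟨(biprod.uniqueUpToIso _ _ hb).hom, Iso.isIso_hom _, ?_⟩
  simp [hypFormOn, hypForm, hypObj, ← H.starMap_comp]

@[simp]
theorem splitForm_comp_starMap_inl {M N : D} (f : N ⟶ H.star M) (g : M ⟶ H.star N) :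
    H.splitForm f g ≫ H.starMap biprod.inl = biprod.snd ≫ f := by
  apply biprod.hom_ext' <;> simp [splitForm, ← H.starMap_comp, H.starMap_zero, H.starMap_id]

@[simp]
theorem splitForm_comp_starMap_inr {M N : D} (f : N ⟶ H.star M) (g : M ⟶ H.star N) :
    H.splitForm f g ≫ H.starMap biprod.inr = biprod.fst ≫ g := by
  apply biprod.hom_ext' <;> simp [splitForm, ← H.starMap_comp, H.starMap_zero, H.starMap_id]

theorem omega_comp_starMap_splitForm {M N : D} (f : N ⟶ H.star M) (g : M ⟶ H.star N) :
    H.omega (M ⊞ N) ≫ H.starMap (H.splitForm f g) =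
      H.splitForm (H.omega N ≫ H.starMap g) (H.omega M ≫ H.starMap f) := by
  apply biprod.hom_ext'
  · rw [comp_omega_comp_starMap, splitForm_comp_starMap_inl, H.starMap_comp]
    simp [splitForm]
  · rw [comp_omega_comp_starMap, splitForm_comp_starMap_inr, H.starMap_comp]
    simp [splitForm]

theorem splitForm_comp_starMap_braiding {M N : D} (f : N ⟶ H.star M) (g : M ⟶ H.star N) :
    H.splitForm f g ≫ H.starMap (biprod.braiding N M).hom =
      biprod.desc (g ≫ H.starMap biprod.fst) (f ≫ H.starMap biprod.snd) := by
  apply biprod.hom_ext' <;> simp [splitForm, ← H.starMap_comp]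

theorem eq_conj_splitForm_of_braiding {V M N : D} {s : V ⟶ H.star V} (f : N ⟶ H.star M)
    (g : M ⟶ H.star N) (φ : V ⟶ M ⊞ N) (ψ : N ⊞ M ⟶ V)
    (hφψ : φ ≫ (biprod.braiding M N).hom ≫ ψ = 𝟙 V)
    (hs : φ ≫ biprod.desc (g ≫ H.starMap biprod.fst) (f ≫ H.starMap biprod.snd) =
      s ≫ H.starMap ψ) :
    s = φ ≫ H.splitForm f g ≫ H.starMap φ :=
  calc s = s ≫ H.starMap ψ ≫ H.starMap (φ ≫ (biprod.braiding M N).hom) := by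
        rw [← H.starMap_comp, Category.assoc, hφψ, H.starMap_id, Category.comp_id]
    _ = φ ≫ H.splitForm f g ≫ H.starMap ((biprod.braiding M N).hom ≫
          (biprod.braiding N M).hom) ≫ H.starMap φ := by
        rw [← reassoc_of% hs, ← splitForm_comp_starMap_braiding]
        simp only [H.starMap_comp, Category.assoc]
    _ = φ ≫ H.splitForm f g ≫ H.starMap φ := by
        rw [biprod.symmetry, H.starMap_id, Category.id_comp]

end HermStructure

namespace TDAObj

variable {C : Type u} [Category.{v} C] [Preadditive C] {ι : Type v} {Hs : ι → HermStructure C}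

instance isIso_φ {Z Z' : TDAObj Hs} (u : Z ⟶ Z') [IsIso u] : IsIso u.φ :=
  ⟨(inv u).φ, congrArg Hom.φ (IsIso.hom_inv_id u), congrArg Hom.φ (IsIso.inv_hom_id u)⟩

theorem reflexive_tdaHerm (Z : TDAObj Hs) : (tdaHerm Hs).Reflexive Z :=
  isIso_of _ (inferInstanceAs (IsIso (𝟙 Z.M))) (inferInstanceAs (IsIso (𝟙 Z.N)))

@[simp] theorem tdaHerm_starMap_φ {Z Z' : TDAObj Hs} (u : Z ⟶ Z') :
    ((tdaHerm Hs).starMap u).φ = u.ψ := rfl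

@[simp] theorem tdaHerm_starMap_ψ {Z Z' : TDAObj Hs} (u : Z ⟶ Z') :
    ((tdaHerm Hs).starMap u).ψ = u.φ := rfl

@[simp] theorem sysZForm_φ {M : C} (s : ∀ i, M ⟶ (Hs i).star M) : (sysZForm s).φ = 𝟙 M := rfl

@[simp] theorem sysZForm_ψ {M : C} (s : ∀ i, M ⟶ (Hs i).star M) : (sysZForm s).ψ = 𝟙 M := rfl

theorem isometric_sysZForm {X Y : SysFormObj Hs} (h : X.Isometric Y) :
    (tdaHerm Hs).Isometric (sysZForm X.form) (sysZForm Y.form) := by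
  obtain ⟨e, he⟩ := h
  exact ⟨((Ffunctor Hs).map ⟨e, he⟩).hom.1, ((Ffunctor Hs).map ⟨e, he⟩).hom.2⟩

variable [HasBinaryBiproducts C]

def biprodBiconeIsBilimit (Z W : TDAObj Hs) : (biprodBicone Z W).IsBilimit :=
  isBinaryBilimitOfTotal _ (by apply hom_ext <;> exact biprod.total)

theorem hypFormOn_biprodBicone_φ (Q : TDAObj Hs) :
    ((tdaHerm Hs).hypFormOn 1 (biprodBicone Q ((tdaHerm Hs).star Q))).φ =
      (biprod.braiding Q.M Q.N).hom := by
  change (biprod.snd : Q.M ⊞ Q.N ⟶ Q.N) ≫ (biprod.inl : Q.N ⟶ Q.N ⊞ Q.M) +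
    (1 : ℤ) • ((biprod.fst : Q.M ⊞ Q.N ⟶ Q.M) ≫ 𝟙 Q.M ≫ (biprod.inr : Q.M ⟶ Q.N ⊞ Q.M)) = _
  apply biprod.hom_ext <;> simp

theorem hypFormOn_biprodBicone_ψ (Q : TDAObj Hs) :
    ((tdaHerm Hs).hypFormOn 1 (biprodBicone Q ((tdaHerm Hs).star Q))).ψ =
      (biprod.braiding Q.M Q.N).hom := by
  change (biprod.fst : Q.M ⊞ Q.N ⟶ Q.M) ≫ (biprod.inr : Q.M ⟶ Q.N ⊞ Q.M) +
    (1 : ℤ) • (((biprod.snd : Q.M ⊞ Q.N ⟶ Q.N) ≫ 𝟙 Q.N) ≫ (biprod.inl : Q.N ⟶ Q.N ⊞ Q.M)) = _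
  apply biprod.hom_ext <;> simp

theorem isIsometry_splitForm_of_sysZForm_eq {V : C} {s : ∀ i, V ⟶ (Hs i).star V}
    {Q : TDAObj Hs} (u : sysZ s ⟶ (biprodBicone Q ((tdaHerm Hs).star Q)).pt) [IsIso u]
    (hu : sysZForm s =
      u ≫ (tdaHerm Hs).hypFormOn 1 (biprodBicone Q _) ≫ (tdaHerm Hs).starMap u) (i : ι) :
    (Hs i).IsIsometry (s i)
      ((Hs i).splitForm ((Hs i).omega Q.N ≫ (Hs i).starMap (Q.f i)) (Q.g i)) u.φ := by
  refine ⟨isIso_φ u, (Hs i).eq_conj_splitForm_of_braiding _ _ u.φ u.ψ ?_ (u.condg i)⟩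
  have hφ := congrArg Hom.φ hu
  simp only [comp_φ, tdaHerm_starMap_φ, sysZForm_φ, hypFormOn_biprodBicone_φ] at hφ
  exact hφ.symm

theorem isometric_sysZForm_splitForm_hypFormOn (Q : TDAObj Hs) :
    (tdaHerm Hs).Isometric
      (sysZForm fun i => (Hs i).splitForm ((Hs i).omega Q.N ≫ (Hs i).starMap (Q.f i)) (Q.g i))
      ((tdaHerm Hs).hypFormOn 1 (biprodBicone Q ((tdaHerm Hs).star Q))) := by
  let w : sysZ (fun i => (Hs i).splitForm ((Hs i).omega Q.N ≫ (Hs i).starMap (Q.f i)) (Q.g i)) ⟶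
      (biprodBicone Q ((tdaHerm Hs).star Q)).pt :=
    { φ := 𝟙 (Q.M ⊞ Q.N)
      ψ := (biprod.braiding Q.N Q.M).hom
      condf := fun i => by
        have hf := congrArg (· ≫ (Hs i).starMap (biprod.braiding Q.N Q.M).hom)
          ((Hs i).omega_comp_starMap_splitForm ((Hs i).omega Q.N ≫ (Hs i).starMap (Q.f i)) (Q.g i))
        simp only [HermStructure.splitForm_comp_starMap_braiding,
          HermStructure.omega_starMap_omega_starMap] at hf
        exact (Category.id_comp _).trans hf.symm
      condg := fun i =>
        (Category.id_comp _).trans (HermStructure.splitForm_comp_starMap_braiding _ _ _).symm }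
  refine ⟨w, isIso_of w (inferInstanceAs (IsIso (𝟙 _))) (Iso.isIso_hom _), ?_⟩
  apply hom_ext
  · simp only [comp_φ, sysZForm_φ, tdaHerm_starMap_φ, hypFormOn_biprodBicone_φ]
    exact (biprod.symmetry Q.M Q.N).symm.trans (Category.id_comp _).symm
  · simp only [comp_ψ, sysZForm_ψ, tdaHerm_starMap_ψ, hypFormOn_biprodBicone_ψ]
    exact (biprod.symmetry Q.M Q.N).symm.trans
      ((Category.id_comp _).symm.trans (Category.assoc _ _ _).symm)

end TDAObj

section IsHypSesq

variable {C : Type u} [Category.{v} C] [Preadditive C] [HasBinaryBiproducts C]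
  {H : HermStructure C}

theorem IsHypSesq.of_isometric {V V' : C} {s : V ⟶ H.star V} {s' : V' ⟶ H.star V'}
    (h : H.Isometric s s') (h' : IsHypSesq H s') : IsHypSesq H s := by
  obtain ⟨Q, hQ, hs'⟩ := h'
  obtain ⟨e, he, hes⟩ := h
  have hF := TDAObj.isometric_sysZForm (X := ⟨V, fun _ : PUnit.{v + 1} => s⟩)
    (Y := ⟨V', fun _ => s'⟩) ⟨e, he, fun _ => hes⟩
  exact ⟨Q, hQ, hF.trans hs'⟩

theorem exists_isometric_splitForm_of_isHypSesq {V : C} {s : V ⟶ H.star V}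
    (h : IsHypSesq H s) :
    ∃ (M N : C) (f : N ⟶ H.star M) (g : M ⟶ H.star N), H.Isometric s (H.splitForm f g) := by
  obtain ⟨Q, -, hQ⟩ := h
  obtain ⟨u, hu, hsu⟩ :=
    hQ.trans ((tdaHerm _).isometric_hypFormOn_hypForm 1 (TDAObj.biprodBiconeIsBilimit Q _)).symm
  exact ⟨Q.M, Q.N, _, _, _, TDAObj.isIsometry_splitForm_of_sysZForm_eq u hsu PUnit.unit⟩

theorem isHypSesq_splitForm {M N : C} (f : N ⟶ H.star M) (g : M ⟶ H.star N) :
    IsHypSesq H (H.splitForm f g) := by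
  let Q : TDAObj fun _ : PUnit.{v + 1} => H :=
    ⟨M, N, fun _ => H.omega M ≫ H.starMap f, fun _ => g⟩
  have hQ := (TDAObj.isometric_sysZForm_splitForm_hypFormOn Q).trans
    ((tdaHerm _).isometric_hypFormOn_hypForm 1 (TDAObj.biprodBiconeIsBilimit Q _))
  dsimp only [Q] at hQ
  rw [H.omega_starMap_omega_starMap] at hQ
  exact ⟨Q, TDAObj.reflexive_tdaHerm Q, hQ⟩

end IsHypSesq

/-- Up to isometry, the hyperbolic sesquilinear forms over a hermitian
category `C` are exactly the forms `(M ⊕ N, [[0, f], [g, 0]])` with `f : N ⟶ M*`,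
`g : M ⟶ N*`; in particular every form of this shape is hyperbolic. -/
theorem isHypSesq_iff_splitForm {C : Type u} [Category.{v} C] [Preadditive C]
    (H : HermStructure C) [HasBinaryBiproducts C] {V : C} (s : V ⟶ H.star V) :
    (IsHypSesq H s ↔ ∃ (M N : C) (f : N ⟶ H.star M) (g : M ⟶ H.star N),
      H.Isometric s (H.splitForm f g)) ∧
    (∀ (M N : C) (f : N ⟶ H.star M) (g : M ⟶ H.star N),
      IsHypSesq H (H.splitForm f g)) :=
  ⟨⟨exists_isometric_splitForm_of_isHypSesq,
      fun ⟨_, _, f, g, h⟩ => (isHypSesq_splitForm f g).of_isometric h⟩,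
    fun _ _ => isHypSesq_splitForm⟩

end HermCat
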